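/- Let P_n be the set of real symmetric positive semidefinite n×n matrices all of whose diagonal entries equal 1. For A ∈ P_n let √A denote the unique symmetric positive semidefinite square root of A, and define W(A) = ∫_{ℝⁿ} e^{−|x|²} · 1_{ℝⁿ_{≥0}}(√A · x) dx, where 1_{ℝⁿ_{≥0}} is the characteristic function of the closed nonnegative orthant. Then W is continuous on P_n: for any sequence A_m ∈ P_n with A_m → A ∈ P_n, one has W(A_m) → W(A). -/

import Mathlib

/-!
The map `A ↦ √A` is continuous on positive semidefinite matrices, so `√(A m) → √L`. For every `x`
off the union of the hyperplanes `{x | (√L x)ᵢ = 0}` the integrand converges, because the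
indicator of the orthant is locally constant away from the coordinate hyperplanes; and these
hyperplanes are null because each row of `√L` is nonzero, as `(√L · √L)ᵢᵢ = Lᵢᵢ = 1`. Dominated
convergence with the Gaussian as majorant concludes.
-/

open Matrix MeasureTheory Classical

/-- The unique symmetric positive semidefinite square root of a positive semidefinite
real matrix (junk value `0` if the matrix is not positive semidefinite). -/
noncomputable def msqrt (n : ℕ) (A : Matrix (Fin n) (Fin n) ℝ) : Matrix (Fin n) (Fin n) ℝ :=
  if h : A.PosSemidef then
    (h.1.eigenvectorUnitary : Matrix (Fin n) (Fin n) ℝ) *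
      diagonal (RCLike.ofReal ∘ Real.sqrt ∘ h.1.eigenvalues) *
      (star h.1.eigenvectorUnitary : Matrix (Fin n) (Fin n) ℝ)
  else 0

/-- `W(A) = ∫_{ℝⁿ} e^{-|x|²} · 1_{ℝⁿ_{≥0}}(√A · x) dx`. -/
noncomputable def Wfun (n : ℕ) (A : Matrix (Fin n) (Fin n) ℝ) : ℝ :=
  ∫ x : Fin n → ℝ,
    Real.exp (-(x ⬝ᵥ x)) *
      Set.indicator {y : Fin n → ℝ | ∀ i, 0 ≤ y i} (fun _ => (1 : ℝ)) ((msqrt n A) *ᵥ x)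

open Filter Topology
open scoped MatrixOrder

theorem msqrt_eq_cfcSqrt {n : ℕ} {A : Matrix (Fin n) (Fin n) ℝ} (h : A.PosSemidef) :
    msqrt n A = CFC.sqrt A := by
  rw [msqrt, dif_pos h, CFC.sqrt_eq_cfc, cfc_nnreal_eq_real _ A, h.1.cfc_eq]
  simp only [IsHermitian.cfc, Unitary.conjStarAlgAut_apply, Real.coe_sqrt, Real.coe_toNNReal']
  congr 3
  funext i
  simp [max_eq_left (h.eigenvalues_nonneg i)]

-- The scoped C⋆-norm on matrices induces the same topology as the entrywise one.
theorem Matrix.continuousOn_cfcSqrt {ι : Type*} [Fintype ι] [DecidableEq ι] :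
    ContinuousOn (CFC.sqrt : Matrix ι ι ℝ → Matrix ι ι ℝ) {A | A.PosSemidef} := by
  open scoped Matrix.Norms.L2Operator in
  simpa only [nonneg_iff_posSemidef] using CFC.continuousOn_sqrt (A := Matrix ι ι ℝ)

theorem Matrix.ne_zero_of_mul_apply_ne_zero {ι R : Type*} [Fintype ι]
    [NonUnitalNonAssocSemiring R] {S T : Matrix ι ι R} {i j : ι} (h : (S * T) i j ≠ 0) :
    S i ≠ 0 := by
  intro hS
  simp [mul_apply, hS] at h

theorem MeasureTheory.Measure.addHaar_setOf_dotProduct_eq_zero {ι : Type*} [Fintype ι]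
    (μ : Measure (ι → ℝ)) [μ.IsAddHaarMeasure] {v : ι → ℝ} (hv : v ≠ 0) :
    μ {x | v ⬝ᵥ x = 0} = 0 := by
  refine Measure.addHaar_submodule μ (LinearMap.ker (dotProductBilin ℝ ℝ v)) fun htop => hv ?_
  rw [LinearMap.ker_eq_top] at htop
  exact dotProduct_eq_zero_iff.1 fun w => by simpa using LinearMap.congr_fun htop w

theorem continuousAt_indicator_orthant {ι : Type*} [Fintype ι] {y : ι → ℝ} (hy : ∀ i, y i ≠ 0) :
    ContinuousAt ((Set.Ici (0 : ι → ℝ)).indicator fun _ => (1 : ℝ)) y := by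
  have hcoord (i : ι) : ContinuousAt (fun z : ι → ℝ => z i) y :=
    (continuous_apply i).continuousAt
  by_cases hpos : ∀ i, 0 < y i
  · have hnear : ∀ᶠ z in 𝓝 y, z ∈ Set.Ici 0 :=
      (eventually_all.2 fun i => (hcoord i).eventually (lt_mem_nhds (hpos i))).mono
        fun _ hz i => (hz i).le
    have hy₀ : y ∈ Set.Ici 0 := fun i => (hpos i).le
    refine tendsto_nhds_of_eventually_eq (hnear.mono fun z hz => ?_)
    rw [Set.indicator_of_mem hz, Set.indicator_of_mem hy₀]
  · obtain ⟨i, hi⟩ : ∃ i, y i < 0 := by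
      obtain ⟨i, hi⟩ := not_forall.1 hpos
      exact ⟨i, (not_lt.1 hi).lt_of_ne (hy i)⟩
    have hnear : ∀ᶠ z in 𝓝 y, z ∉ Set.Ici 0 :=
      ((hcoord i).eventually (gt_mem_nhds hi)).mono fun _ hz h => (h i).not_gt hz
    have hy₀ : y ∉ Set.Ici 0 := fun h => (h i).not_gt hi
    refine tendsto_nhds_of_eventually_eq (hnear.mono fun z hz => ?_)
    rw [Set.indicator_of_notMem hz, Set.indicator_of_notMem hy₀]

theorem integrable_exp_neg_dotProduct_self {ι : Type*} [Fintype ι] :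
    Integrable fun x : ι → ℝ => Real.exp (-(x ⬝ᵥ x)) := by
  have hprod : (fun x : ι → ℝ => Real.exp (-(x ⬝ᵥ x))) =
      fun x => ∏ i, Real.exp (-1 * x i ^ 2) := by
    funext x
    simp [← Real.exp_sum, dotProduct, sq]
  rw [hprod]
  exact Integrable.fintype_prod fun _ => integrable_exp_neg_mul_sq one_pos

theorem tendsto_integral_mul_indicator_orthant {ι α : Type*} [Fintype ι] {l : Filter α}
    [l.IsCountablyGenerated] {g : (ι → ℝ) → ℝ} (hg : Integrable g) {S : α → Matrix ι ι ℝ}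
    {T : Matrix ι ι ℝ} (hS : Tendsto S l (𝓝 T)) (hT : ∀ i, T i ≠ 0) :
    Tendsto (fun a => ∫ x, g x * (Set.Ici 0).indicator (fun _ => 1) (S a *ᵥ x))
      l (𝓝 (∫ x, g x * (Set.Ici 0).indicator (fun _ => 1) (T *ᵥ x))) := by
  have hmeas (M : Matrix ι ι ℝ) : AEStronglyMeasurable
      (fun x => g x * (Set.Ici 0).indicator (fun _ => 1) (M *ᵥ x)) :=
    hg.aestronglyMeasurable.mul <| ((measurable_const.indicator measurableSet_Ici).comp
      (continuous_const.matrix_mulVec continuous_id).measurable).aestronglyMeasurable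
  have hbound (M : Matrix ι ι ℝ) (x : ι → ℝ) :
      ‖g x * (Set.Ici 0).indicator (fun _ => 1) (M *ᵥ x)‖ ≤ ‖g x‖ := by
    rw [norm_mul]
    refine mul_le_of_le_one_right (norm_nonneg _) ?_
    simpa using norm_indicator_le_norm_self (s := Set.Ici 0) (fun _ => (1 : ℝ)) (M *ᵥ x)
  have hgeneric : ∀ᵐ x : ι → ℝ, ∀ i, (T *ᵥ x) i ≠ 0 :=
    ae_all_iff.2 fun i => ae_iff.2 <| by
      simpa [mulVec] using Measure.addHaar_setOf_dotProduct_eq_zero volume (hT i)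
  refine tendsto_integral_filter_of_dominated_convergence _ (.of_forall fun _ => hmeas _)
    (.of_forall fun _ => .of_forall (hbound _)) hg.norm (hgeneric.mono fun x hx => ?_)
  have hSx : Tendsto (fun a => S a *ᵥ x) l (𝓝 (T *ᵥ x)) :=
    ((continuous_id.matrix_mulVec continuous_const).tendsto T).comp hS
  exact tendsto_const_nhds.mul ((continuousAt_indicator_orthant hx).tendsto.comp hSx)

/-- `W` is (sequentially) continuous on the set of symmetric positive semidefinite
matrices with unit diagonal. -/
theorem stmt3 (n : ℕ) (A : ℕ → Matrix (Fin n) (Fin n) ℝ)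
    (hA : ∀ m, (A m).IsSymm ∧ (∀ i, A m i i = 1) ∧ (A m).PosSemidef)
    (L : Matrix (Fin n) (Fin n) ℝ)
    (hL : L.IsSymm ∧ (∀ i, L i i = 1) ∧ L.PosSemidef)
    (hconv : Filter.Tendsto A Filter.atTop (nhds L)) :
    Filter.Tendsto (fun m => Wfun n (A m)) Filter.atTop (nhds (Wfun n L)) := by
  have hsqrt : Tendsto (fun m => CFC.sqrt (A m)) atTop (𝓝 (CFC.sqrt L)) :=
    (continuousOn_cfcSqrt.continuousWithinAt hL.2.2).tendsto.comp
      (tendsto_nhdsWithin_iff.2 ⟨hconv, .of_forall fun m => (hA m).2.2⟩)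
  have hrow (i : Fin n) : CFC.sqrt L i ≠ 0 :=
    ne_zero_of_mul_apply_ne_zero (j := i) <| by
      rw [CFC.sqrt_mul_sqrt_self L hL.2.2.nonneg, hL.2.1 i]
      exact one_ne_zero
  simp only [Wfun, msqrt_eq_cfcSqrt (hA _).2.2, msqrt_eq_cfcSqrt hL.2.2]
  exact tendsto_integral_mul_indicator_orthant integrable_exp_neg_dotProduct_self hsqrt hrow
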